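/- arXiv:2303.02349 — 5 statements merged into one kernel-verified Lean document; each statement's English description precedes it below -/
import Mathlib

section
/- Let Γ be a finite simple graph and d ≥ 1 an integer. For a subset C of the vertices of Γ with at least two elements, let d_Γ(C) denote the minimum of the graph distances d_Γ(x,y) over all pairs of distinct vertices x, y ∈ C. Then the set of cardinalities {|C| : C ⊆ V(Γ), |C| ≥ 2, d_Γ(C) = d} equals the set of cardinalities {|C| : C ⊆ V(Γ), |C| ≥ 2, d_Γ(C) ≥ d}. In particular, if there is a code of size N and minimum distance at least d in which every pair of code vertices is joined by a path, then there is a code of size N and minimum distance exactly d. -/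
/-!
If every two code vertices are at distance at least `d + 1`, pick a pair `x, y` and replace `y` by
its neighbour `y'` on a geodesic to `x`. Moving one vertex by one edge changes each distance by at
most one, so the new code still has minimum distance at least `d`; it has the same size because
`y'` is at distance at least `d ≥ 1` from every remaining code vertex; and `x, y'` are one step
closer. Repeating this, some pair ends up at distance exactly `d`.
-/

open Finset

namespace SimpleGraph

variable {V : Type*} {G : SimpleGraph V}

lemma Adj.dist_le_dist_add_one {v w : V} (h : G.Adj v w) (u : V) :
    G.dist u w ≤ G.dist u v + 1 := by
  simpa [dist_eq_one_iff_adj.mpr h] using h.reachable.dist_triangle_right u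

lemma exists_adj_dist_eq_of_dist_eq_succ {x y : V} {n : ℕ} (h : G.dist x y = n + 1) :
    ∃ y', G.Adj y y' ∧ G.dist x y' = n := by
  have hyx : G.dist y x = n + 1 := by rwa [dist_comm]
  obtain ⟨p, hp⟩ := exists_walk_of_dist_ne_zero (by omega : G.dist y x ≠ 0)
  have hnil : ¬p.Nil := by rw [← Walk.length_eq_zero_iff]; omega
  refine ⟨p.snd, p.adj_snd hnil, le_antisymm ?_ ?_⟩
  · have := dist_le p.tail
    have := p.length_tail_add_one hnil
    rw [dist_comm]
    omega
  · have := (p.adj_snd hnil).symm.dist_le_dist_add_one x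
    omega

section Codes

variable [DecidableEq V] {C : Finset V} {d : ℕ} {y y' : V}

lemma pairwise_le_dist_insert_erase (hy : y ∈ C)
    (hC : (C : Set V).Pairwise fun a b => d + 1 ≤ G.dist a b) (hy' : G.Adj y y') :
    ((insert y' (C.erase y) : Finset V) : Set V).Pairwise fun a b => d ≤ G.dist a b := by
  rw [coe_insert, coe_erase, Set.pairwise_insert]
  refine ⟨(hC.mono Set.sdiff_subset).mono' fun a b h => by omega, fun b hb _ => ?_⟩
  have : d ≤ G.dist b y' := by
    have := hC hb.1 hy (by simpa using hb.2)
    have := hy'.symm.dist_le_dist_add_one b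
    omega
  exact ⟨by rwa [dist_comm], this⟩

lemma notMem_erase_of_adj (hd : 1 ≤ d) (hy : y ∈ C)
    (hC : (C : Set V).Pairwise fun a b => d + 1 ≤ G.dist a b) (hy' : G.Adj y y') :
    y' ∉ C.erase y := by
  intro h
  obtain ⟨hne, hy'C⟩ := mem_erase.mp h
  have := dist_eq_one_iff_adj.mpr hy'.symm
  have := hC hy'C hy hne
  omega

lemma card_insert_erase_of_adj (hd : 1 ≤ d) (hy : y ∈ C)
    (hC : (C : Set V).Pairwise fun a b => d + 1 ≤ G.dist a b) (hy' : G.Adj y y') :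
    #(insert y' (C.erase y)) = #C := by
  rw [card_insert_of_notMem (notMem_erase_of_adj hd hy hC hy'), card_erase_add_one hy]

theorem exists_pairwise_le_dist_and_dist_eq (hd : 1 ≤ d) (n : ℕ)
    (hC : (C : Set V).Pairwise fun a b => d ≤ G.dist a b) {x y : V} (hx : x ∈ C) (hy : y ∈ C)
    (hxy : G.dist x y = d + n) :
    ∃ C' : Finset V, #C' = #C ∧ ((C' : Set V).Pairwise fun a b => d ≤ G.dist a b) ∧
      ∃ a ∈ C', ∃ b ∈ C', G.dist a b = d := by
  induction n generalizing C x y with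
  | zero => exact ⟨C, rfl, hC, x, hx, y, hy, hxy⟩
  | succ n ih =>
    by_cases hexact : ∃ a ∈ C, ∃ b ∈ C, G.dist a b = d
    · exact ⟨C, rfl, hC, hexact⟩
    push Not at hexact
    have hC' : (C : Set V).Pairwise fun a b => d + 1 ≤ G.dist a b :=
      fun a ha b hb hab => (hC ha hb hab).lt_of_ne (hexact a ha b hb).symm
    obtain ⟨y', hy', hxy'⟩ := exists_adj_dist_eq_of_dist_eq_succ hxy
    have hx' : x ∈ insert y' (C.erase y) := by
      refine mem_insert_of_mem (mem_erase.mpr ⟨?_, hx⟩)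
      rintro rfl
      simp at hxy
    obtain ⟨C', hcard, hC'', hexact'⟩ :=
      ih (pairwise_le_dist_insert_erase hy hC' hy') hx' (mem_insert_self _ _) hxy'
    exact ⟨C', hcard.trans (card_insert_erase_of_adj hd hy hC' hy'), hC'', hexact'⟩

end Codes

end SimpleGraph

open SimpleGraph

theorem graphical_codes_min_dist_exact_iff_at_least_general
    {V : Type*} (G : SimpleGraph V) (d : ℕ) (hd : 1 ≤ d) :
    {N : ℕ | ∃ C : Finset V, 2 ≤ C.card ∧
        (∀ x ∈ C, ∀ y ∈ C, x ≠ y → G.Reachable x y) ∧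
        (∀ x ∈ C, ∀ y ∈ C, x ≠ y → d ≤ G.dist x y) ∧
        (∃ x ∈ C, ∃ y ∈ C, x ≠ y ∧ G.dist x y = d) ∧
        C.card = N}
      =
    {N : ℕ | ∃ C : Finset V, 2 ≤ C.card ∧
        (∀ x ∈ C, ∀ y ∈ C, x ≠ y → G.Reachable x y) ∧
        (∀ x ∈ C, ∀ y ∈ C, x ≠ y → d ≤ G.dist x y) ∧
        C.card = N} := by
  classical
  ext N
  refine ⟨fun ⟨C, hcard, hreach, hC, _, hN⟩ => ⟨C, hcard, hreach, hC, hN⟩, ?_⟩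
  rintro ⟨C, hcard, -, hC, rfl⟩
  obtain ⟨x, hx, y, hy, hxy⟩ := one_lt_card.mp hcard
  have := hC x hx y hy hxy
  obtain ⟨C', hcard', hC', a, ha, b, hb, hab⟩ :=
    exists_pairwise_le_dist_and_dist_eq hd (G.dist x y - d) hC hx hy (by omega)
  -- `G.dist` is `0` on unreachable pairs, so distance at least `d ≥ 1` forces reachability.
  have hreach : ∀ a ∈ C', ∀ b ∈ C', a ≠ b → G.Reachable a b := fun a ha b hb hne =>
    Reachable.of_dist_ne_zero (by have := hC' ha hb hne; omega)
  have hne : a ≠ b := by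
    rintro rfl
    rw [dist_self] at hab
    omega
  exact ⟨C', hcard' ▸ hcard, hreach, hC', ⟨a, ha, b, hb, hne, hab⟩, hcard'⟩

/-- For a finite simple graph `G` and `d ≥ 1`, the set of cardinalities of
codes (of size ≥ 2, with all pairs of code vertices reachable) whose minimum distance is
exactly `d` equals the set of cardinalities of such codes with minimum distance at least `d`. -/
theorem graphical_codes_min_dist_exact_iff_at_least
    {V : Type*} [Fintype V] (G : SimpleGraph V) (d : ℕ) (hd : 1 ≤ d) :
    {N : ℕ | ∃ C : Finset V, 2 ≤ C.card ∧
        (∀ x ∈ C, ∀ y ∈ C, x ≠ y → G.Reachable x y) ∧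
        (∀ x ∈ C, ∀ y ∈ C, x ≠ y → d ≤ G.dist x y) ∧
        (∃ x ∈ C, ∃ y ∈ C, x ≠ y ∧ G.dist x y = d) ∧
        C.card = N}
      =
    {N : ℕ | ∃ C : Finset V, 2 ≤ C.card ∧
        (∀ x ∈ C, ∀ y ∈ C, x ≠ y → G.Reachable x y) ∧
        (∀ x ∈ C, ∀ y ∈ C, x ≠ y → d ≤ G.dist x y) ∧
        C.card = N} :=
  graphical_codes_min_dist_exact_iff_at_least_general G d hd
end

section
/- Let n ≥ 3, let H = Stab_{S_n}(1) be the stabilizer of the point 1 in the symmetric group S_n (the Young subgroup corresponding to the partition (n−1,1)), let S = {(i,i+1) : 1 ≤ i ≤ n−1} be the set of adjacent transpositions and T = S ∪ {ξ}, and for i ∈ [n] let (1,i) denote the transposition swapping 1 and i (with (1,1) = ξ). Then for all i, j ∈ [n]: |T ∩ (1,i)H(1,j)| equals n−1 if i = j ∈ {1, n}; equals n−2 if i = j and 2 ≤ i ≤ n−1; equals 1 if |i−j| = 1; and equals 0 otherwise. Hence the matrix (|T ∩ (1,i)H(1,j)|)_{i,j} is the n×n tridiagonal matrix with diagonal (n−1,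 n−2, …, n−2, n−1) and all sub- and super-diagonal entries equal to 1. -/
/-!
The double coset `(1,i) H (1,j)` of the point stabiliser `H` is the set of permutations sending
`j` to `i`. The identity lies in it iff `i = j`, and the adjacent transposition `(k,k+1)` sends
`j` to `i` iff either `{i,j} = {k,k+1}`, or `i = j` and `j ∉ {k,k+1}`. So off the diagonal only
`(i,j)` itself can contribute, while on the diagonal all `n - 1` adjacent transpositions but the
one or two moving `j` do, plus the identity.
-/

/-- The set of adjacent transpositions `(i, i+1)`, `1 ≤ i ≤ n−1`, in `S_n`
(realized on `Fin n`, with the point `k ∈ [n]` corresponding to the index `k−1`). -/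
def adjTranspositions (n : ℕ) : Set (Equiv.Perm (Fin n)) :=
  {σ | ∃ i : ℕ, ∃ h : i + 1 < n, σ = Equiv.swap ⟨i, Nat.lt_of_succ_lt h⟩ ⟨i + 1, h⟩}

open Finset Equiv

theorem MulAction.setOf_mul_stabilizer_mul_eq {G X : Type*} [Group G] [MulAction G X]
    (g k : G) (x : X) :
    {σ : G | ∃ h ∈ stabilizer G x, σ = g * h * k} = {σ | σ • k⁻¹ • x = g • x} := by
  ext σ
  constructor
  · rintro ⟨h, hh, rfl⟩
    simp [mul_smul, mem_stabilizer_iff.mp hh]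
  · intro hσ
    refine ⟨g⁻¹ * σ * k⁻¹, ?_, by group⟩
    rw [mem_stabilizer_iff, mul_smul, mul_smul, hσ, inv_smul_smul]

lemma card_range_filter_swap_succ_apply_eq {n a b : ℕ} (ha : a < n) (hb : b < n) :
    #{k ∈ range (n - 1) | swap k (k + 1) b = a} =
      if a = b then (if b = 0 ∨ b = n - 1 then n - 2 else n - 3)
      else if a + 1 = b ∨ b + 1 = a then 1 else 0 := by
  by_cases hab : a = b
  · subst hab
    -- also right for `a = 0`, where the truncated `a - 1 = 0` empties the first piece
    have hfix : {k ∈ range (n - 1) | swap k (k + 1) a = a} =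
        range (a - 1) ∪ Ico (a + 1) (n - 1) := by
      ext k
      simp only [mem_filter, mem_range, mem_union, mem_Ico]
      rw [swap_apply_def]
      split_ifs <;> omega
    have hdisj : Disjoint (range (a - 1)) (Ico (a + 1) (n - 1)) :=
      disjoint_left.mpr fun k hk hk' => by simp only [mem_range, mem_Ico] at hk hk'; omega
    rw [hfix, card_union_of_disjoint hdisj, card_range, Nat.card_Ico, if_pos rfl]
    split_ifs <;> omega
  · have hmove : {k ∈ range (n - 1) | swap k (k + 1) b = a} =
        if a + 1 = b then {a} else if b + 1 = a then {b} else ∅ := by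
      split_ifs <;> ext k <;>
        simp only [mem_filter, mem_range, mem_singleton, notMem_empty, iff_false] <;>
        rw [swap_apply_def] <;> split_ifs <;> omega
    rw [hmove, if_neg hab]
    split_ifs <;> simp only [card_singleton, card_empty] <;> omega

/-- The adjacent transposition `(k, k+1)` of `Fin n`, or `1` when `n ≤ k + 1`. -/
def adjSwap (n k : ℕ) : Perm (Fin n) :=
  if h : k + 1 < n then swap ⟨k, Nat.lt_of_succ_lt h⟩ ⟨k + 1, h⟩ else 1

lemma adjSwap_of_lt {n k : ℕ} (h : k + 1 < n) :
    adjSwap n k = swap ⟨k, Nat.lt_of_succ_lt h⟩ ⟨k + 1, h⟩ :=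
  dif_pos h

lemma val_adjSwap_apply {n k : ℕ} (h : k + 1 < n) (j : Fin n) :
    (adjSwap n k j : ℕ) = swap k (k + 1) (j : ℕ) := by
  rw [adjSwap_of_lt h, swap_apply_def, swap_apply_def]
  split_ifs <;> simp_all [Fin.ext_iff]

lemma adjSwap_ne_one {n k : ℕ} (h : k + 1 < n) : adjSwap n k ≠ 1 := by
  intro h₁
  have := val_adjSwap_apply h ⟨k, Nat.lt_of_succ_lt h⟩
  simp only [h₁, Perm.one_apply, swap_apply_left] at this
  omega

lemma adjSwap_injOn (n : ℕ) : Set.InjOn (adjSwap n) (range (n - 1)) := by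
  intro k hk l hl hkl
  simp only [coe_range, Set.mem_Iio] at hk hl
  have := congrArg (fun σ : Perm (Fin n) => (σ ⟨k, by omega⟩ : ℕ)) hkl
  simp only [val_adjSwap_apply (show k + 1 < n by omega),
    val_adjSwap_apply (show l + 1 < n by omega), swap_apply_left, swap_apply_def] at this
  split_ifs at this <;> omega

lemma adjTranspositions_eq_image (n : ℕ) :
    adjTranspositions n = (range (n - 1)).image (adjSwap n) := by
  ext σ
  simp only [adjTranspositions, Set.mem_ofPred_eq, coe_image, coe_range, Set.mem_image,
    Set.mem_Iio]
  constructor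
  · rintro ⟨k, h, rfl⟩
    exact ⟨k, by omega, adjSwap_of_lt h⟩
  · rintro ⟨k, hk, rfl⟩
    exact ⟨k, by omega, adjSwap_of_lt (by omega)⟩

lemma card_adjTranspositions_union_one_inter (n : ℕ) (p : Perm (Fin n) → Prop)
    [DecidablePred p] :
    Nat.card ((adjTranspositions n ∪ {1}) ∩ {σ | p σ} : Set (Perm (Fin n))) =
      #{k ∈ range (n - 1) | p (adjSwap n k)} + if p 1 then 1 else 0 := by
  have hset : ((adjTranspositions n ∪ {1}) ∩ {σ | p σ} : Set (Perm (Fin n))) =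
      (insert 1 ((range (n - 1)).image (adjSwap n))).filter p := by
    ext σ
    simp [adjTranspositions_eq_image]
  have hone : 1 ∉ ((range (n - 1)).filter (p ∘ adjSwap n)).image (adjSwap n) := by
    simp only [mem_image, mem_filter, mem_range, not_exists, not_and]
    rintro k ⟨hk, -⟩
    exact adjSwap_ne_one (by omega)
  have hcard := card_image_of_injOn ((adjSwap_injOn n).mono (filter_subset (p ∘ adjSwap n) _))
  rw [hset, Nat.card_coe_set_eq, Set.ncard_coe_finset, filter_insert, filter_image]
  split_ifs
  · exact (card_insert_of_notMem hone).trans (congrArg (· + 1) hcard)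
  · exact hcard

lemma card_range_filter_adjSwap_apply_eq {n : ℕ} (i j : Fin n) :
    #{k ∈ range (n - 1) | adjSwap n k j = i} =
      if (i : ℕ) = j then (if (j : ℕ) = 0 ∨ (j : ℕ) = n - 1 then n - 2 else n - 3)
      else if (i : ℕ) + 1 = j ∨ (j : ℕ) + 1 = i then 1 else 0 := by
  rw [← card_range_filter_swap_succ_apply_eq i.isLt j.isLt]
  refine congrArg card (filter_congr fun k hk => ?_)
  rw [Fin.ext_iff, val_adjSwap_apply (Nat.add_lt_of_lt_sub (mem_range.mp hk))]

/-- for `n ≥ 3`, `H = Stab_{S_n}(1)` (the Young subgroup of the partition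
`(n−1,1)`), `T` the set of adjacent transpositions together with the identity, and
`(1,i)` the transposition swapping the point `1` and the point `i` (so `(1,1) = ξ`),
the quantity `|T ∩ (1,i) H (1,j)|` equals `n−1` if `i = j` is an endpoint, `n−2` if
`i = j` is interior, `1` if `|i−j| = 1`, and `0` otherwise: the tridiagonal matrix. -/
theorem young_subgroup_coset_matrix (n : ℕ) (hn : 3 ≤ n) (i j : Fin n) :
    Nat.card
      ((adjTranspositions n ∪ {1}) ∩
        {σ : Equiv.Perm (Fin n) |
          ∃ h ∈ MulAction.stabilizer (Equiv.Perm (Fin n)) (⟨0, by omega⟩ : Fin n),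
            σ = Equiv.swap (⟨0, by omega⟩ : Fin n) i * h *
                  Equiv.swap (⟨0, by omega⟩ : Fin n) j} : Set (Equiv.Perm (Fin n)))
      =
    if i = j then
      (if (i : ℕ) = 0 ∨ (i : ℕ) = n - 1 then n - 1 else n - 2)
    else if (i : ℕ) + 1 = (j : ℕ) ∨ (j : ℕ) + 1 = (i : ℕ) then 1 else 0 := by
  rw [MulAction.setOf_mul_stabilizer_mul_eq]
  simp only [swap_inv, Perm.smul_def, swap_apply_left]
  rw [card_adjTranspositions_union_one_inter, card_range_filter_adjSwap_apply_eq,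
    Perm.one_apply]
  split_ifs <;> simp only [Fin.ext_iff] at * <;> omega
end

section
/- Let p ≥ 7 be a prime and let M be the p×p tridiagonal integer matrix with diagonal entries M_{11} = M_{pp} = p−1, M_{ii} = p−2 for 2 ≤ i ≤ p−1, sub- and super-diagonal entries equal to 1, and all other entries 0. If x₁,…,x_p are non-negative integers satisfying M(x₁,…,x_p)ᵗ ≤ (p−1)!·𝟏 (entrywise), then the number of indices i ∈ [p] with p·x_i ≤ (p−1)! is at least ⌈p/3⌉. -/
open scoped BigOperators

/-- The `p×p` tridiagonal matrix with diagonal `(p−1, p−2, …, p−2, p−1)`,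
sub- and super-diagonal entries `1`, and all other entries `0`. -/
def triMatrix (p : ℕ) (i j : Fin p) : ℕ :=
  if (i : ℕ) = (j : ℕ) then
    (if (i : ℕ) = 0 ∨ (i : ℕ) = p - 1 then p - 1 else p - 2)
  else if (i : ℕ) + 1 = (j : ℕ) ∨ (j : ℕ) + 1 = (i : ℕ) then 1 else 0

/-!
Every row of `triMatrix p` sums to `p`, so the `i`-th inequality bounds a weighted average of
`p * x j` over the neighbours `j` of `i` (indices at distance at most one) by `(p-1)!`. Hence
every index has a neighbour `j` with `p * x j ≤ (p-1)!`: these indices dominate the path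
`0, …, p-1`, and each covers at most three indices, so there are at least `p / 3` of them.
-/

open Finset

theorem Finset.exists_sum_mul_le_of_sum_mul_le {ι : Type*} {s : Finset ι} {c x : ι → ℕ} {F : ℕ}
    (h : ∑ j ∈ s, c j * x j ≤ F) (hc : ∑ j ∈ s, c j ≠ 0) :
    ∃ j ∈ s, c j ≠ 0 ∧ (∑ j ∈ s, c j) * x j ≤ F := by
  by_contra! hbig
  obtain ⟨j₀, hj₀, hc₀⟩ := exists_ne_zero_of_sum_ne_zero hc
  have : (∑ j ∈ s, c j) * F < (∑ j ∈ s, c j) * ∑ j ∈ s, c j * x j := by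
    rw [sum_mul, mul_sum]
    refine sum_lt_sum (fun j hj => ?_) ⟨j₀, hj₀, ?_⟩
    · rcases eq_or_ne (c j) 0 with h0 | h0
      · simp [h0]
      · rw [mul_left_comm]; exact Nat.mul_le_mul_left _ (hbig j hj h0).le
    · rw [mul_left_comm]
      exact Nat.mul_lt_mul_of_pos_left (hbig j₀ hj₀ hc₀) (Nat.pos_of_ne_zero hc₀)
  exact absurd (Nat.mul_le_mul_left _ h) this.not_ge

theorem triMatrix_ne_zero {p : ℕ} {i j : Fin p} (h : triMatrix p i j ≠ 0) :
    (i : ℕ) ≤ j + 1 ∧ (j : ℕ) ≤ i + 1 := by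
  unfold triMatrix at h
  split_ifs at h <;> omega

theorem sum_triMatrix {p : ℕ} (hp : 2 ≤ p) (i : Fin p) : ∑ j, triMatrix p i j = p := by
  have hsplit : ∀ j : Fin p, triMatrix p i j =
      (if j = (i : ℕ) then (if (i : ℕ) = 0 ∨ (i : ℕ) = p - 1 then p - 1 else p - 2) else 0) +
      (if (j : ℕ) = i + 1 then 1 else 0) +
      (if (i : ℕ) = 0 then 0 else if (j : ℕ) = i - 1 then 1 else 0) := by
    intro j; unfold triMatrix; split_ifs <;> omega
  simp only [hsplit, sum_add_distrib]
  rw [Fin.sum_univ_eq_sum_range (fun j => if j = (i : ℕ) then _ else 0),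
    Fin.sum_univ_eq_sum_range (fun j => if j = (i : ℕ) + 1 then 1 else 0),
    Fin.sum_univ_eq_sum_range
      (fun j => if (i : ℕ) = 0 then 0 else if j = (i : ℕ) - 1 then 1 else 0)]
  simp only [sum_ite_irrel, sum_ite_eq', mem_range, sum_const_zero]
  split_ifs <;> omega

theorem Fin.le_three_mul_card_of_dominating {n : ℕ} (S : Finset (Fin n))
    (hS : ∀ i : Fin n, ∃ j ∈ S, (i : ℕ) ≤ j + 1 ∧ (j : ℕ) ≤ i + 1) : n ≤ 3 * #S := by
  have hnbhd : ∀ j : Fin n, #{i : Fin n | (i : ℕ) ≤ j + 1 ∧ (j : ℕ) ≤ i + 1} ≤ 3 := by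
    intro j
    calc _ ≤ #(Icc ((j : ℕ) - 1) (j + 1)) :=
          card_le_card_of_injOn Fin.val (fun i hi => by simp at hi ⊢; omega) Fin.val_injective.injOn
      _ ≤ 3 := by simp; omega
  calc n = #(univ : Finset (Fin n)) := (card_fin n).symm
    _ ≤ #(S.biUnion fun j => {i : Fin n | (i : ℕ) ≤ j + 1 ∧ (j : ℕ) ≤ i + 1}) := by
        refine card_le_card fun i _ => ?_
        obtain ⟨j, hj, hij⟩ := hS i
        exact mem_biUnion.2 ⟨j, hj, by simpa using hij⟩
    _ ≤ ∑ j ∈ S, 3 := card_biUnion_le.trans (sum_le_sum fun j _ => hnbhd j)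
    _ = 3 * #S := by rw [Finset.sum_const, smul_eq_mul, mul_comm]

theorem tridiagonal_system_small_entries_general (p : ℕ) (hp : p.Prime)
    (x : Fin p → ℕ)
    (hx : ∀ i : Fin p, ∑ j : Fin p, triMatrix p i j * x j ≤ Nat.factorial (p - 1)) :
    ⌈(p : ℚ) / 3⌉₊ ≤
      (Finset.univ.filter fun i : Fin p => p * x i ≤ Nat.factorial (p - 1)).card := by
  set S := univ.filter fun i : Fin p => p * x i ≤ Nat.factorial (p - 1)
  have hrow := sum_triMatrix hp.two_le
  have hdom : ∀ i : Fin p, ∃ j ∈ S, (i : ℕ) ≤ j + 1 ∧ (j : ℕ) ≤ i + 1 := by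
    intro i
    obtain ⟨j, -, hij, hxj⟩ :=
      exists_sum_mul_le_of_sum_mul_le (hx i) (by rw [hrow]; exact hp.ne_zero)
    rw [hrow] at hxj
    exact ⟨j, mem_filter.2 ⟨mem_univ j, hxj⟩, triMatrix_ne_zero hij⟩
  rw [Nat.ceil_le, div_le_iff₀ three_pos]
  exact_mod_cast (Fin.le_three_mul_card_of_dominating S hdom).trans_eq (mul_comm _ _)

/-- for a prime `p ≥ 7` and non-negative integers `x₁,…,x_p` with
`M x ≤ (p−1)!·𝟏` entrywise, the number of indices `i` with `p·xᵢ ≤ (p−1)!`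
is at least `⌈p/3⌉`. -/
theorem tridiagonal_system_small_entries (p : ℕ) (hp : p.Prime) (hp7 : 7 ≤ p)
    (x : Fin p → ℕ)
    (hx : ∀ i : Fin p, ∑ j : Fin p, triMatrix p i j * x j ≤ Nat.factorial (p - 1)) :
    ⌈(p : ℚ) / 3⌉₊ ≤
      (Finset.univ.filter fun i : Fin p => p * x i ≤ Nat.factorial (p - 1)).card :=
  tridiagonal_system_small_entries_general p hp x hx
end

section
/- Let p ≥ 7 be a prime and let M be the p×p tridiagonal integer matrix with diagonal entries M_{11} = M_{pp} = p−1, M_{ii} = p−2 for 2 ≤ i ≤ p−1, sub- and super-diagonal entries equal to 1, and all other entries 0. Let x₁,…,x_p be non-negative integers satisfying M(x₁,…,x_p)ᵗ ≤ (p−1)!·𝟏, let x_max = max{x_i : i ∈ [p]}, and suppose ∑_{i=1}^p x_i = (p−1)! − k for an integer k ≥ 0. Then the number of indices i with x_i = x_max is at least p − k − 2. -/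
/-!
Let `m` be the largest entry of `x`, attained at `i`. Row `i` of `M x` is at least
`(p - 2) m + x a + x b` for two distinct indices `a, b`: the two neighbours of `i`, or, when `i`
is an end point, its neighbour and the next index, the latter absorbed by the extra `m` of the
corner entry `p - 1`. Since this row is at most `(p - 1)! = ∑ x + k`, the deficits `m - x j` over
the remaining `p - 2` indices add up to at most `k`, so at most `k` of them are below `m`.
-/

open scoped BigOperators

open Finset

section Counting

variable {ι : Type*}

lemma card_filter_ne_le_sum_tsub {s : Finset ι} {x : ι → ℕ} {m : ℕ} (hm : ∀ j ∈ s, x j ≤ m) :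
    #(s.filter fun j => x j ≠ m) ≤ ∑ j ∈ s, (m - x j) :=
  calc #(s.filter fun j => x j ≠ m)
      _ = ∑ j ∈ s.filter (fun j => x j ≠ m), 1 := card_eq_sum_ones _
      _ ≤ ∑ j ∈ s.filter (fun j => x j ≠ m), (m - x j) := by
        refine sum_le_sum fun j hj => ?_
        have := hm j (mem_of_mem_filter j hj)
        have := (mem_filter.mp hj).2
        omega
      _ ≤ ∑ j ∈ s, (m - x j) := sum_le_sum_of_subset (filter_subset _ _)

lemma card_sub_sub_two_le_card_filter_eq [Fintype ι] [DecidableEq ι] (x : ι → ℕ) {m : ℕ}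
    (hm : ∀ j, x j ≤ m) (k : ℕ) {a b : ι} (hab : a ≠ b)
    (h : (Fintype.card ι - 2) * m + x a + x b ≤ ∑ j, x j + k) :
    Fintype.card ι - k - 2 ≤ #(univ.filter fun j => x j = m) := by
  set s := (univ.erase a).erase b
  have hb : b ∈ univ.erase a := mem_erase.mpr ⟨hab.symm, mem_univ b⟩
  have hs_card : #s = Fintype.card ι - 2 := by
    rw [card_erase_of_mem hb, card_erase_of_mem (mem_univ a), card_univ]; omega
  have hs_sum : ∑ j ∈ s, x j + x b + x a = ∑ j, x j := by
    rw [sum_erase_add _ _ hb, sum_erase_add _ _ (mem_univ a)]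
  have hdeficit : ∑ j ∈ s, (m - x j) + ∑ j ∈ s, x j = #s * m := by
    rw [← sum_add_distrib, sum_congr rfl fun j _ => Nat.sub_add_cancel (hm j), sum_const,
      smul_eq_mul]
  have hcount := card_filter_ne_le_sum_tsub fun j (_ : j ∈ s) => hm j
  have hsplit := card_filter_add_card_filter_not (s := s) (fun j => x j = m)
  have hmono : #(s.filter fun j => x j = m) ≤ #(univ.filter fun j => x j = m) :=
    card_le_card (filter_subset_filter _ (subset_univ s))
  rw [hs_card] at hdeficit hsplit
  simp only [ne_eq] at hcount
  generalize (Fintype.card ι - 2) * m = t at h hdeficit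
  omega

end Counting

section TriMatrix

variable {p : ℕ}

lemma triMatrix_of_adjacent (i j : Fin p) (h : (i : ℕ) + 1 = j ∨ (j : ℕ) + 1 = i) :
    triMatrix p i j = 1 := by
  rw [triMatrix, if_neg (by omega), if_pos h]

lemma triMatrix_self_of_end (i : Fin p) (h : (i : ℕ) = 0 ∨ (i : ℕ) = p - 1) :
    triMatrix p i i = p - 1 := by
  rw [triMatrix, if_pos rfl, if_pos h]

lemma triMatrix_self_of_interior (i : Fin p) (h : ¬((i : ℕ) = 0 ∨ (i : ℕ) = p - 1)) :
    triMatrix p i i = p - 2 := by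
  rw [triMatrix, if_pos rfl, if_neg h]

variable {x : Fin p → ℕ} {i a b : Fin p}

lemma add_le_triMatrix_row_of_end (hend : (i : ℕ) = 0 ∨ (i : ℕ) = p - 1)
    (hb : (i : ℕ) + 1 = b ∨ (b : ℕ) + 1 = i) (ha : x a ≤ x i) :
    (p - 2) * x i + x a + x b ≤ ∑ j, triMatrix p i j * x j := by
  have hib : i ≠ b := Fin.ne_of_val_ne (by omega)
  have hp_sub : p - 1 = p - 2 + 1 := by omega
  calc (p - 2) * x i + x a + x b
      _ ≤ triMatrix p i i * x i + triMatrix p i b * x b := by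
        rw [triMatrix_self_of_end i hend, triMatrix_of_adjacent i b hb, hp_sub, add_one_mul]
        omega
      _ = ∑ j ∈ {i, b}, triMatrix p i j * x j := by rw [sum_pair hib]
      _ ≤ _ := sum_le_sum_of_subset (subset_univ _)

lemma add_le_triMatrix_row_of_interior (ha : (a : ℕ) + 1 = i) (hb : (i : ℕ) + 1 = b) :
    (p - 2) * x i + x a + x b ≤ ∑ j, triMatrix p i j * x j := by
  have hai : a ≠ i := Fin.ne_of_val_ne (by omega)
  have hab : a ≠ b := Fin.ne_of_val_ne (by omega)
  have hib : i ≠ b := Fin.ne_of_val_ne (by omega)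
  calc (p - 2) * x i + x a + x b
      _ = triMatrix p i a * x a + (triMatrix p i i * x i + triMatrix p i b * x b) := by
        rw [triMatrix_of_adjacent i a (.inr ha), triMatrix_of_adjacent i b (.inl hb),
          triMatrix_self_of_interior i (by omega)]
        ring
      _ = ∑ j ∈ {a, i, b}, triMatrix p i j * x j := by
        rw [sum_insert (by simp [hai, hab]), sum_pair hib]
      _ ≤ _ := sum_le_sum_of_subset (subset_univ _)

lemma exists_ne_add_le_triMatrix_row (hp : 3 ≤ p) (hmax : ∀ j, x j ≤ x i) :
    ∃ a b : Fin p, a ≠ b ∧ (p - 2) * x i + x a + x b ≤ ∑ j, triMatrix p i j * x j := by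
  rcases (by omega : (i : ℕ) = 0 ∨ (i : ℕ) = p - 1 ∨ 0 < (i : ℕ) ∧ (i : ℕ) < p - 1)
    with hfirst | hlast | ⟨hpos, hlt⟩
  · exact ⟨⟨2, by omega⟩, ⟨1, by omega⟩, by simp,
      add_le_triMatrix_row_of_end (.inl hfirst) (by simp [hfirst]) (hmax _)⟩
  · exact ⟨⟨p - 3, by omega⟩, ⟨p - 2, by omega⟩, Fin.ne_of_val_ne (by simp; omega),
      add_le_triMatrix_row_of_end (.inr hlast) (by simp; omega) (hmax _)⟩
  · exact ⟨⟨i - 1, by omega⟩, ⟨i + 1, by omega⟩, Fin.ne_of_val_ne (by simp),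
      add_le_triMatrix_row_of_interior (by simp; omega) rfl⟩

end TriMatrix

theorem tridiagonal_system_max_entries_general (p : ℕ) (hp7 : 7 ≤ p)
    (x : Fin p → ℕ)
    (hx : ∀ i : Fin p, ∑ j : Fin p, triMatrix p i j * x j ≤ Nat.factorial (p - 1))
    (k : ℕ) (hk : (∑ i : Fin p, x i) + k = Nat.factorial (p - 1)) :
    p - k - 2 ≤
      (Finset.univ.filter fun i : Fin p => x i = Finset.univ.sup x).card := by
  obtain ⟨i, -, hi⟩ := exists_mem_eq_sup univ ⟨⟨0, by omega⟩, mem_univ _⟩ x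
  have hm : ∀ j, x j ≤ univ.sup x := fun j => le_sup (mem_univ j)
  obtain ⟨a, b, hab, hrow⟩ := exists_ne_add_le_triMatrix_row (by omega) (hi ▸ hm)
  rw [← hi] at hrow
  simpa using card_sub_sub_two_le_card_filter_eq x hm k hab
    (by simpa [hk] using hrow.trans (hx i))

/-- for a prime `p ≥ 7` and non-negative integers `x₁,…,x_p` with
`M x ≤ (p−1)!·𝟏` entrywise and `∑ xᵢ = (p−1)! − k` (i.e. `∑ xᵢ + k = (p−1)!`),
the number of indices `i` with `xᵢ = x_max` is at least `p − k − 2`. -/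
theorem tridiagonal_system_max_entries (p : ℕ) (hp : p.Prime) (hp7 : 7 ≤ p)
    (x : Fin p → ℕ)
    (hx : ∀ i : Fin p, ∑ j : Fin p, triMatrix p i j * x j ≤ Nat.factorial (p - 1))
    (k : ℕ) (hk : (∑ i : Fin p, x i) + k = Nat.factorial (p - 1)) :
    p - k - 2 ≤
      (Finset.univ.filter fun i : Fin p => x i = Finset.univ.sup x).card :=
  tridiagonal_system_max_entries_general p hp7 x hx k hk
end

section
/- Every subset C of the symmetric group S_17 in which any two distinct permutations have Kendall τ-distance at least 3 satisfies |C| ≤ 16! − 5; that is, P(17,3) ≤ 16! − 5. -/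
/-- `σ` is an adjacent transposition `(i, i+1)` of `S_n` realized on `Fin n`. -/
def IsAdjTransposition {n : ℕ} (σ : Equiv.Perm (Fin n)) : Prop :=
  ∃ i : ℕ, ∃ h : i + 1 < n, σ = Equiv.swap ⟨i, Nat.lt_of_succ_lt h⟩ ⟨i + 1, h⟩

/-- The Kendall τ-distance between two permutations `ρ, π ∈ S_n`: the minimum number of
adjacent transpositions whose product equals `ρπ⁻¹`. -/
noncomputable def kendallDist {n : ℕ} (ρ π : Equiv.Perm (Fin n)) : ℕ :=
  sInf {t : ℕ | ∃ l : List (Equiv.Perm (Fin n)),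
    l.length = t ∧ (∀ s ∈ l, IsAdjTransposition s) ∧ l.prod = ρ * π⁻¹}

/-!
Codewords at distance `≥ 3` have disjoint Kendall balls `unitBall * σ` of radius one. Sort the
permutations of `S_{n+1}` by their value at `0` into fibers of size `n!`. The ball around `σ`
meets the fiber of `σ 0` in `n - 1` points (`n` if `σ 0` is an end point `0` or `n`) and the
fibers of `σ 0 ± 1` in one point each. So if `c k` codewords have `σ 0 = k`, then
`c (k-1) + (n-1) c k + c (k+1) ≤ n!` for every `k`.

Fix `Q` with `n! < (n+1) Q`; for `n + 1 = 17` Wilson's theorem allows `17 Q = 16! + 1`. In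
terms of `d k = Q - c k` the constraints read `d (k-1) + (n-1) d k + d (k+1) ≥ 1`. Hence the positions with `d k ≥ 1` dominate the path `0, …, n`, so there are at least
`(n+1)/3` of them, and every negative `d k` is paid for by the excess of its neighbours. This
gives `3 ∑ d k ≥ n + 1`, which for `n = 16` means `|C| ≤ 17 Q - 6 = 16! - 5`.
-/

open Equiv Finset

namespace KendallCode

variable {n : ℕ}

theorem kendallDist_le_length {ρ π : Perm (Fin n)} (l : List (Perm (Fin n)))
    (hl : ∀ s ∈ l, IsAdjTransposition s) (hprod : l.prod = ρ * π⁻¹) :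
    kendallDist ρ π ≤ l.length :=
  Nat.sInf_le ⟨l, rfl, hl, hprod⟩

def adjSwap (j : Fin n) : Perm (Fin (n + 1)) := swap j.castSucc j.succ

theorem isAdjTransposition_adjSwap (j : Fin n) : IsAdjTransposition (adjSwap j) :=
  ⟨j, Nat.succ_lt_succ j.2, rfl⟩

theorem adjSwap_ne_one (j : Fin n) : adjSwap j ≠ 1 :=
  swap_eq_one_iff.not.2 j.castSucc_lt_succ.ne

theorem adjSwap_injective : Function.Injective (adjSwap (n := n)) := by
  intro i j h
  have := congrArg (· i.castSucc) h
  simp only [adjSwap, swap_apply_def, Fin.ext_iff] at this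
  ext
  split_ifs at this <;> simp only [Fin.val_castSucc, Fin.val_succ] at * <;> omega

def unitBall (n : ℕ) : Finset (Perm (Fin (n + 1))) := insert 1 (univ.image adjSwap)

theorem mem_unitBall {u : Perm (Fin (n + 1))} : u ∈ unitBall n ↔ u = 1 ∨ ∃ j, adjSwap j = u := by
  simp [unitBall]

theorem adjSwap_mem_unitBall (j : Fin n) : adjSwap j ∈ unitBall n :=
  mem_unitBall.2 (Or.inr ⟨j, rfl⟩)

theorem card_unitBall : #(unitBall n) = n + 1 := by
  rw [unitBall, card_insert_of_notMem, card_image_of_injective _ adjSwap_injective, card_univ,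
    Fintype.card_fin]
  simpa [eq_comm] using adjSwap_ne_one

theorem inv_eq_self_of_mem_unitBall {u : Perm (Fin (n + 1))} (hu : u ∈ unitBall n) :
    u⁻¹ = u := by
  obtain rfl | ⟨j, rfl⟩ := mem_unitBall.1 hu
  · exact inv_one
  · exact swap_inv _ _

theorem exists_word_of_mem_unitBall {u : Perm (Fin (n + 1))} (hu : u ∈ unitBall n) :
    ∃ l : List (Perm (Fin (n + 1))),
      l.length ≤ 1 ∧ (∀ s ∈ l, IsAdjTransposition s) ∧ l.prod = u := by
  obtain rfl | ⟨j, rfl⟩ := mem_unitBall.1 hu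
  · exact ⟨[], by simp⟩
  · exact ⟨[adjSwap j], by simp [isAdjTransposition_adjSwap]⟩

theorem kendallDist_le_two_of_mul_eq_mul {σ τ u w : Perm (Fin (n + 1))} (hu : u ∈ unitBall n)
    (hw : w ∈ unitBall n) (h : u * σ = w * τ) : kendallDist σ τ ≤ 2 := by
  obtain ⟨l, hl, hl_adj, hl_prod⟩ := exists_word_of_mem_unitBall hu
  obtain ⟨m, hm, hm_adj, hm_prod⟩ := exists_word_of_mem_unitBall hw
  have hprod : (l ++ m).prod = σ * τ⁻¹ := by
    rw [List.prod_append, hl_prod, hm_prod, ← inv_eq_self_of_mem_unitBall hu,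
      inv_mul_eq_iff_eq_mul, ← mul_assoc, h, mul_inv_cancel_right]
  calc kendallDist σ τ ≤ (l ++ m).length :=
        kendallDist_le_length _ (fun s hs => (List.mem_append.1 hs).elim (hl_adj s) (hm_adj s))
          hprod
    _ ≤ 2 := by simp only [List.length_append]; omega

theorem card_filter_apply_zero_eq_factorial (v : Fin (n + 1)) :
    #{π : Perm (Fin (n + 1)) | π 0 = v} = n.factorial := by
  have hfiber : ({π : Perm (Fin (n + 1)) | π 0 = v} : Finset _) =
      univ.image fun e => Perm.decomposeFin.symm (v, e) := by
    ext π
    obtain ⟨⟨p, e⟩, rfl⟩ := Perm.decomposeFin.symm.surjective π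
    simp [Perm.decomposeFin_symm_apply_zero, eq_comm]
  rw [hfiber, card_image_of_injective _ fun e e' h => by
      simpa using Perm.decomposeFin.symm.injective h,
    card_univ, Fintype.card_perm, Fintype.card_fin]

theorem sum_card_unitBall_filter_le {C : Finset (Perm (Fin (n + 1)))}
    (hC : ∀ x ∈ C, ∀ y ∈ C, x ≠ y → 3 ≤ kendallDist x y) (v : Fin (n + 1)) :
    ∑ σ ∈ C, #{u ∈ unitBall n | u (σ 0) = v} ≤ n.factorial := by
  set B : Perm (Fin (n + 1)) → Finset (Perm (Fin (n + 1))) :=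
    fun σ => {u ∈ unitBall n | u (σ 0) = v}.image (· * σ)
  have hB : ∀ σ, #(B σ) = #{u ∈ unitBall n | u (σ 0) = v} :=
    fun σ => card_image_of_injective _ (mul_left_injective σ)
  have hdisj : (C : Set (Perm (Fin (n + 1)))).PairwiseDisjoint B := by
    intro x hx y hy hxy
    refine disjoint_left.2 fun π hπx hπy => ?_
    obtain ⟨u, hu, rfl⟩ := mem_image.1 hπx
    obtain ⟨w, hw, hwy⟩ := mem_image.1 hπy
    have := kendallDist_le_two_of_mul_eq_mul (mem_filter.1 hu).1 (mem_filter.1 hw).1 hwy.symm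
    have := hC x hx y hy hxy
    omega
  calc ∑ σ ∈ C, #{u ∈ unitBall n | u (σ 0) = v} = #(C.biUnion B) := by
        rw [card_biUnion hdisj]; exact (sum_congr rfl fun σ _ => hB σ).symm
    _ ≤ #{π : Perm (Fin (n + 1)) | π 0 = v} := by
        refine card_le_card fun π hπ => ?_
        obtain ⟨σ, -, hσ⟩ := mem_biUnion.1 hπ
        obtain ⟨u, hu, rfl⟩ := mem_image.1 hσ
        simpa using (mem_filter.1 hu).2
    _ = n.factorial := card_filter_apply_zero_eq_factorial v

theorem card_filter_val_add_eq_le (c m : ℕ) :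
    #{j : Fin n | (j : ℕ) + c = m} ≤ if c ≤ m ∧ m < n + c then 1 else 0 := by
  split_ifs with h
  · exact card_le_one.2 fun a ha b hb => Fin.ext (by simp only [mem_filter] at ha hb; omega)
  · simp only [nonpos_iff_eq_zero, card_eq_zero, filter_eq_empty_iff, mem_univ, true_implies]
    omega

theorem card_unitBall_filter_apply_ne_le (v : Fin (n + 1)) :
    #{u ∈ unitBall n | u v ≠ v} ≤
      (if (v : ℕ) < n then 1 else 0) + (if 1 ≤ (v : ℕ) then 1 else 0) := by
  have hsub : {u ∈ unitBall n | u v ≠ v} ⊆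
      (({j : Fin n | (j : ℕ) = v} : Finset (Fin n)) ∪
        ({j : Fin n | (j : ℕ) + 1 = v} : Finset (Fin n))).image adjSwap := by
    intro u hu
    obtain ⟨hu, huv⟩ := mem_filter.1 hu
    obtain rfl | ⟨j, rfl⟩ := mem_unitBall.1 hu
    · exact absurd rfl huv
    refine mem_image_of_mem _ ?_
    by_contra hj
    simp only [mem_union, mem_filter, mem_univ, true_and, not_or] at hj
    exact huv (swap_apply_of_ne_of_ne (fun h => hj.1 (by simp [h]))
      (fun h => hj.2 (by simp [h])))
  calc #{u ∈ unitBall n | u v ≠ v}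
      ≤ #{j : Fin n | (j : ℕ) = v} + #{j : Fin n | (j : ℕ) + 1 = v} :=
        (card_le_card hsub).trans (card_image_le.trans (card_union_le _ _))
    _ ≤ _ := by
        have h₀ := card_filter_val_add_eq_le (n := n) 0 v
        simp only [add_zero] at h₀
        have h₁ := card_filter_val_add_eq_le (n := n) 1 v
        split_ifs at h₀ h₁ ⊢ <;> omega

theorem le_card_unitBall_filter_apply_eq (hn : 1 ≤ n) (a v : Fin (n + 1)) :
    (if (a : ℕ) = (v : ℕ) - 1 then 1 else 0) + (n - 1) * (if a = v then 1 else 0) +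
      (if (a : ℕ) = min ((v : ℕ) + 1) n then 1 else 0) ≤ #{u ∈ unitBall n | u a = v} := by
  rcases eq_or_ne a v with rfl | hav
  · have hsplit := card_filter_add_card_filter_not (s := unitBall n) (fun u => u a = a)
    have hne := card_unitBall_filter_apply_ne_le a
    rw [card_unitBall] at hsplit
    have := a.isLt
    simp only [ne_eq] at hne
    split_ifs at hne ⊢ <;> omega
  · have hav' : (a : ℕ) ≠ v := Fin.val_injective.ne hav
    have hpos : (a : ℕ) + 1 = v ∨ (a : ℕ) = v + 1 → 1 ≤ #{u ∈ unitBall n | u a = v} := by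
      rintro (h | h)
      · obtain ⟨j, rfl, rfl⟩ : ∃ j : Fin n, j.castSucc = a ∧ j.succ = v :=
          ⟨⟨a, by omega⟩, rfl, Fin.ext h⟩
        exact card_pos.2 ⟨adjSwap j, mem_filter.2 ⟨adjSwap_mem_unitBall j, swap_apply_left _ _⟩⟩
      · obtain ⟨j, rfl, rfl⟩ : ∃ j : Fin n, j.succ = a ∧ j.castSucc = v :=
          ⟨⟨v, by omega⟩, Fin.ext h.symm, rfl⟩
        exact card_pos.2 ⟨adjSwap j, mem_filter.2 ⟨adjSwap_mem_unitBall j, swap_apply_right _ _⟩⟩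
    split_ifs <;> omega

def firstEntryCount (C : Finset (Perm (Fin (n + 1)))) (k : ℕ) : ℕ := #{σ ∈ C | (σ 0 : ℕ) = k}

theorem sum_firstEntryCount (C : Finset (Perm (Fin (n + 1)))) :
    ∑ k ∈ range (n + 1), firstEntryCount C k = #C :=
  (card_eq_sum_card_fiberwise fun σ _ => mem_range.2 (σ 0).isLt).symm

/-- At `k = 0` the truncated `k - 1`, and at `k = n` the clamped `min (k + 1) n`, equals `k`; this
accounts for the extra fixed point of the ball at the end points, e.g. `16 c 0 + c 1 ≤ 16!`. -/
theorem firstEntryCount_local_le (hn : 1 ≤ n) {C : Finset (Perm (Fin (n + 1)))}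
    (hC : ∀ x ∈ C, ∀ y ∈ C, x ≠ y → 3 ≤ kendallDist x y) {k : ℕ} (hk : k ≤ n) :
    firstEntryCount C (k - 1) + (n - 1) * firstEntryCount C k +
      firstEntryCount C (min (k + 1) n) ≤ n.factorial := by
  set v : Fin (n + 1) := ⟨k, by omega⟩
  calc _ = ∑ σ ∈ C, ((if (σ 0 : ℕ) = (v : ℕ) - 1 then 1 else 0) +
        (n - 1) * (if σ 0 = v then 1 else 0) +
        (if (σ 0 : ℕ) = min ((v : ℕ) + 1) n then 1 else 0)) := by
        simp only [firstEntryCount, card_filter, sum_add_distrib, mul_sum, Fin.ext_iff, v]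
    _ ≤ ∑ σ ∈ C, #{u ∈ unitBall n | u (σ 0) = v} :=
        sum_le_sum fun σ _ => le_card_unitBall_filter_apply_eq hn _ _
    _ ≤ n.factorial := sum_card_unitBall_filter_le hC v

theorem le_three_mul_card_of_dominating {P : Finset ℕ}
    (hP : ∀ k ≤ n, k - 1 ∈ P ∨ k ∈ P ∨ min (k + 1) n ∈ P) : n + 1 ≤ 3 * #P := by
  calc n + 1 = #(range (n + 1)) := (card_range _).symm
    _ ≤ #(P.biUnion fun p => {p - 1, p, p + 1}) := card_le_card fun k hk => by
        rw [mem_range] at hk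
        simp only [mem_biUnion, mem_insert, mem_singleton]
        rcases hP k (by omega) with h | h | h
        · exact ⟨_, h, by omega⟩
        · exact ⟨_, h, by omega⟩
        · exact ⟨_, h, by omega⟩
    _ ≤ ∑ p ∈ P, #({p - 1, p, p + 1} : Finset ℕ) := card_biUnion_le
    _ ≤ ∑ p ∈ P, 3 := sum_le_sum fun p _ => card_le_three
    _ = 3 * #P := by rw [sum_const, smul_eq_mul, mul_comm]

theorem sum_range_comp_sub_one_le {f : ℕ → ℤ} (hf : ∀ k, 0 ≤ f k) :
    ∑ k ∈ range (n + 1), f (k - 1) ≤ 2 * ∑ k ∈ range (n + 1), f k := by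
  have h₀ := single_le_sum (fun k _ => hf k) (mem_range.2 (Nat.succ_pos n))
  rw [sum_range_succ] at h₀
  rw [sum_range_succ', sum_range_succ]
  simp only [add_tsub_cancel_right, zero_tsub]
  linarith [hf n, sum_nonneg fun k (_ : k ∈ range n) => hf k]

theorem sum_range_comp_min_le {f : ℕ → ℤ} (hf : ∀ k, 0 ≤ f k) :
    ∑ k ∈ range (n + 1), f (min (k + 1) n) ≤ 2 * ∑ k ∈ range (n + 1), f k := by
  have hlt : ∑ k ∈ range n, f (min (k + 1) n) = ∑ k ∈ range n, f (k + 1) :=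
    sum_congr rfl fun k hk => by rw [min_eq_left (mem_range.1 hk)]
  have := single_le_sum (fun k _ => hf k) (self_mem_range_succ n)
  rw [sum_range_succ, hlt, min_eq_right n.le_succ]
  rw [sum_range_succ'] at this ⊢
  linarith [hf 0]

/-- Write `d k = [1 ≤ d k] + e k - g k` with excess `e k = (d k - 1)⁺` and deficit
`g k = (-d k)⁺`. The local bound makes the neighbours of `k` carry `(m - 1) g k` of excess, and each
excess is claimed by at most four positions, so `m ≥ 5` gives `∑ g ≤ ∑ e`. -/
theorem card_filter_one_le_le_sum {m : ℕ} (hm : 5 ≤ m) {d : ℕ → ℤ}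
    (hd : ∀ k ≤ n, 1 ≤ d (k - 1) + m * d k + d (min (k + 1) n)) :
    (#{k ∈ range (n + 1) | 1 ≤ d k} : ℤ) ≤ ∑ k ∈ range (n + 1), d k := by
  set e : ℕ → ℤ := fun k => max (d k - 1) 0
  set g : ℕ → ℤ := fun k => max (-d k) 0
  have hsplit : ∀ k, d k = (if 1 ≤ d k then 1 else 0) + e k - g k := by
    intro k; simp only [e, g]; split_ifs <;> omega
  have hcharge : ∀ k ∈ range (n + 1), ((m : ℤ) - 1) * g k ≤ e (k - 1) + e (min (k + 1) n) := by
    intro k hk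
    have := hd k (Nat.lt_succ_iff.1 (mem_range.1 hk))
    have he₁ := le_max_left (d (k - 1) - 1) 0
    have he₂ := le_max_left (d (min (k + 1) n) - 1) 0
    rcases le_or_gt 0 (d k) with hk | hk
    · simp only [g, max_eq_right (neg_nonpos.2 hk), mul_zero]
      exact add_nonneg (le_max_right _ _) (le_max_right _ _)
    · simp only [g, e, max_eq_left (neg_nonneg.2 hk.le)] at *
      linarith
  have hE := sum_range_comp_sub_one_le (n := n) (f := e) fun k => le_max_right _ _
  have hE' := sum_range_comp_min_le (n := n) (f := e) fun k => le_max_right _ _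
  have hG := sum_le_sum hcharge
  rw [← mul_sum, sum_add_distrib] at hG
  have hG₀ : 0 ≤ ∑ k ∈ range (n + 1), g k := sum_nonneg fun k _ => le_max_right _ _
  have hm' : (5 : ℤ) ≤ m := by exact_mod_cast hm
  rw [sum_congr rfl fun k _ => hsplit k, sum_sub_distrib, sum_add_distrib, sum_boole]
  nlinarith

theorem le_three_mul_sum_of_local_bound {m : ℕ} (hm : 5 ≤ m) {d : ℕ → ℤ}
    (hd : ∀ k ≤ n, 1 ≤ d (k - 1) + m * d k + d (min (k + 1) n)) :
    (n + 1 : ℤ) ≤ 3 * ∑ k ∈ range (n + 1), d k := by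
  have hdom : n + 1 ≤ 3 * #{k ∈ range (n + 1) | 1 ≤ d k} := by
    refine le_three_mul_card_of_dominating fun k hk => ?_
    simp only [mem_filter, mem_range]
    by_contra! h
    have h₁ : d (k - 1) ≤ 0 := by have := h.1 (by omega); omega
    have h₂ : d k ≤ 0 := by have := h.2.1 (by omega); omega
    have h₃ : d (min (k + 1) n) ≤ 0 := by have := h.2.2 (by omega); omega
    have := hd k hk
    have : (m : ℤ) * d k ≤ 0 := mul_nonpos_of_nonneg_of_nonpos (by positivity) h₂
    omega
  have := card_filter_one_le_le_sum hm hd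
  omega

theorem le_three_mul_sub_card (hn : 6 ≤ n) {C : Finset (Perm (Fin (n + 1)))}
    (hC : ∀ x ∈ C, ∀ y ∈ C, x ≠ y → 3 ≤ kendallDist x y) {Q : ℕ}
    (hQ : n.factorial < (n + 1) * Q) :
    (n + 1 : ℤ) ≤ 3 * ((n + 1) * Q - #C) := by
  have hd : ∀ k ≤ n, 1 ≤ ((Q : ℤ) - firstEntryCount C (k - 1)) +
      ((n - 1 : ℕ) : ℤ) * (Q - firstEntryCount C k) + (Q - firstEntryCount C (min (k + 1) n)) := by
    intro k hk
    have := firstEntryCount_local_le (by omega) hC hk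
    zify [(by omega : 1 ≤ n)] at this hQ
    push_cast [Nat.cast_sub (by omega : 1 ≤ n)]
    nlinarith
  have := le_three_mul_sum_of_local_bound (m := n - 1)
    (d := fun k => (Q : ℤ) - firstEntryCount C k) (by omega) hd
  rw [sum_sub_distrib, sum_const, card_range, ← Nat.cast_sum, sum_firstEntryCount] at this
  simpa using this

end KendallCode

/-- every subset of `S_17` with pairwise Kendall τ-distance at least 3 has size at most `16! − 5`; that is, `P(17,3) ≤ 16! − 5`. -/
theorem perm_code_dist3_card_le_seventeen (C : Finset (Equiv.Perm (Fin 17)))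
    (hC : ∀ x ∈ C, ∀ y ∈ C, x ≠ y → 3 ≤ kendallDist x y) :
    C.card ≤ Nat.factorial 16 - 5 := by
  have h16 : Nat.factorial 16 = 20922789888000 := by decide
  have := KendallCode.le_three_mul_sub_card (n := 16) (by norm_num) hC (Q := 1230752346353)
    (by rw [h16]; norm_num)
  omega
end
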